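/- With ℓ_{X,Y} = (HΛH)_{X,Y}, if (X,Y) ∉ (ker Φ)^⊥ then ℓ_{X,Y} = 0, and if (X,Y) ∈ Δ^⊥ then ℓ_{X,Y} = q^{−r̂} we(C_C). Moreover ℓ_{X+U, Y+V} = ℓ_{X,Y} for all (U,V) ∈ Δ^⊥. -/

import Mathlib

/-!
Expanding the product, `q^δ ℓ_{X,Y}` is the character sum `∑_{(W,Z)} ψ(X·W + Y·Z) λ_{W,Z}`
for the additive character `ψ = ζ^{τ(·)}` of `F`, which is nontrivial because the trace
polynomial `∑_{i<s} x^{p^i}` has degree below `q`. As `λ` vanishes off `Δ`, the sum only depends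
on `(X,Y)` modulo `Δ^⊥`; on `Δ^⊥` it equals `∑ λ`, and since `u ↦ (uB, uD)` is injective (this
is what `dim C_const = k - r` says) every codeword of `C_C` is hit by exactly `q^{δ-r̂}` pairs
`(W, u)`, giving `q^{δ-r̂} we(C_C)`. Finally, `λ_{W,Z}` is the weight enumerator of a coset of
`C_const` that does not move under translation by `ker Φ`; if `(X,Y)` pairs nontrivially with
some `w ∈ ker Φ`, translating by a suitable multiple of `w` multiplies the sum by a character
value `≠ 1`, so the sum vanishes.
-/

open Matrix

open Classical in
/-- The (Hamming) weight enumerator of a subset `S ⊆ F^n`. -/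
noncomputable def we {n : ℕ} {F : Type} [Fintype F] [DecidableEq F] [Zero F]
    (S : Set (Fin n → F)) : Polynomial ℂ :=
  ∑ a : Fin n → F, if a ∈ S then Polynomial.X ^ hammingNorm a else 0

section TraceCharacter

variable {p s : ℕ} [Fact p.Prime] {F : Type*} [Field F]

theorem exists_sum_pow_prime_pow_ne_zero [Fintype F] (hq : Fintype.card F = p ^ s) :
    ∃ a : F, ∑ i ∈ Finset.range s, a ^ p ^ i ≠ 0 := by
  have hp : p.Prime := Fact.out
  have hs : 0 < s := by
    refine Nat.pos_of_ne_zero fun hs => ?_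
    rw [hs, pow_zero] at hq
    exact (Fintype.one_lt_card (α := F)).ne' hq
  by_contra! h
  set P : Polynomial F := ∑ i ∈ Finset.range s, Polynomial.X ^ p ^ i
  -- `P` has degree `p ^ (s - 1) < q` but vanishes on all of `F`
  have hdeg : P.natDegree < Fintype.card F := by
    refine (Polynomial.natDegree_sum_le_of_forall_le _ _ (n := p ^ (s - 1)) fun i hi => ?_).trans_lt
      ?_
    · simpa using Nat.pow_le_pow_right hp.pos (Nat.le_sub_one_of_lt (Finset.mem_range.mp hi))
    · rw [hq]; exact Nat.pow_lt_pow_right hp.one_lt (Nat.sub_lt hs one_pos)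
  have hP : P = 0 := Polynomial.eq_zero_of_natDegree_lt_card_of_eval_eq_zero P
    Function.injective_id (fun a => by simpa [P, Polynomial.eval_finsetSum] using h a) hdeg
  have hcoeff : P.coeff (p ^ (s - 1)) = 1 := by
    rw [Polynomial.finsetSum_coeff, Finset.sum_eq_single_of_mem (s - 1)
      (Finset.mem_range.mpr (Nat.sub_lt hs one_pos))]
    · simp
    · intro i _ hne
      rw [Polynomial.coeff_X_pow, if_neg fun he => hne (Nat.pow_right_injective hp.two_le he.symm)]
  simp [hP] at hcoeff

variable [CharP F p] [Algebra (ZMod p) F] {τ : F → ZMod p}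

theorem map_add_of_algebraMap_eq_sum_pow
    (hτ : ∀ a : F, algebraMap (ZMod p) F (τ a) = ∑ i ∈ Finset.range s, a ^ p ^ i) (a b : F) :
    τ (a + b) = τ a + τ b := by
  apply (algebraMap (ZMod p) F).injective
  simp only [map_add, hτ, ← Finset.sum_add_distrib, add_pow_char_pow]

noncomputable def traceChar {ζ : ℂ} (hζ : IsPrimitiveRoot ζ p)
    (hτ : ∀ a : F, algebraMap (ZMod p) F (τ a) = ∑ i ∈ Finset.range s, a ^ p ^ i) :
    AddChar F ℂ :=
  (AddChar.zmodChar p hζ.pow_eq_one).compAddMonoidHom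
    (AddMonoidHom.mk' τ (map_add_of_algebraMap_eq_sum_pow hτ))

theorem traceChar_isPrimitive [Fintype F] {ζ : ℂ} (hζ : IsPrimitiveRoot ζ p)
    (hτ : ∀ a : F, algebraMap (ZMod p) F (τ a) = ∑ i ∈ Finset.range s, a ^ p ^ i)
    (hq : Fintype.card F = p ^ s) : (traceChar hζ hτ).IsPrimitive := by
  refine AddChar.IsPrimitive.of_ne_one (AddChar.ne_one_iff.mpr ?_)
  obtain ⟨a, ha⟩ := exists_sum_pow_prime_pow_ne_zero (F := F) hq
  refine ⟨a, fun h => ha ?_⟩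
  have hτa : τ a = 0 :=
    ((AddChar.zmodChar_primitive_of_primitive_root p hζ).zmod_char_eq_one_iff p _).mp h
  rw [← hτ, hτa, map_zero]

end TraceCharacter

section CharacterSums

theorem AddChar.sum_smul_eq_zero_of_add_invariant {V K M : Type*} [AddCommGroup V] [Fintype V]
    [Field K] [AddCommGroup M] [Module K M]
    (χ : AddChar V K) (f : V → M) {w : V} (hf : ∀ g, f (g + w) = f g) (hχ : χ w ≠ 1) :
    ∑ g, χ g • f g = 0 := by
  set S := ∑ g, χ g • f g
  have hS : S = χ w • S := by
    calc S = ∑ g, χ (g + w) • f (g + w) := (Equiv.sum_comp (Equiv.addRight w) _).symm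
      _ = χ w • S := by
        rw [Finset.smul_sum]
        exact Finset.sum_congr rfl fun g _ => by rw [AddChar.map_add_eq_mul, hf, mul_comm, mul_smul]
  have : (χ w - 1) • S = 0 := by rw [sub_smul, one_smul, ← hS, sub_self]
  exact (smul_eq_zero.mp this).resolve_left (sub_ne_zero.mpr hχ)

theorem Finset.sum_smul_congr_of_ne_zero {α K M : Type*} [Fintype α] [Semiring K]
    [AddCommMonoid M] [Module K M] {f f' : α → K} {m : α → M}
    (h : ∀ a, m a ≠ 0 → f a = f' a) : ∑ a, f a • m a = ∑ a, f' a • m a :=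
  Finset.sum_congr rfl fun a _ => by
    by_cases ha : m a = 0
    · rw [ha, smul_zero, smul_zero]
    · rw [h a ha]

variable {F ι : Type*} [Field F] [Fintype F] [Fintype ι] [DecidableEq ι]

theorem sum_addChar_dotProduct_smul_eq_zero {M : Type*} [AddCommGroup M] [Module ℂ M]
    {ψ : AddChar F ℂ} (hψ : ψ.IsPrimitive) (f : (ι → F) × (ι → F) → M) {X Y : ι → F}
    {w : (ι → F) × (ι → F)} (hf : ∀ (a : F) g, f (g + a • w) = f g)
    (hw : X ⬝ᵥ w.1 + Y ⬝ᵥ w.2 ≠ 0) :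
    ∑ g : (ι → F) × (ι → F), ψ (X ⬝ᵥ g.1 + Y ⬝ᵥ g.2) • f g = 0 := by
  obtain ⟨a, ha⟩ := AddChar.ne_one_iff.mp (hψ hw)
  refine AddChar.sum_smul_eq_zero_of_add_invariant
    (ψ.compAddMonoidHom ((dotProductBilin F F X).coprod (dotProductBilin F F Y)).toAddMonoidHom)
    f (hf a) ?_
  change ψ (X ⬝ᵥ (a • w).1 + Y ⬝ᵥ (a • w).2) ≠ 1
  rwa [Prod.smul_fst, Prod.smul_snd, dotProduct_smul, dotProduct_smul, smul_eq_mul, smul_eq_mul,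
    ← mul_add, mul_comm]

theorem map_C_mul_mul_map_C_apply (ψ : AddChar F ℂ) {x : ℝ} (hx : 0 ≤ x)
    (H : Matrix (ι → F) (ι → F) ℂ) (hH : ∀ X Y, H X Y = ((Real.sqrt x)⁻¹ : ℂ) * ψ (X ⬝ᵥ Y))
    (Λ : Matrix (ι → F) (ι → F) (Polynomial ℂ)) (X Y : ι → F) :
    (H.map Polynomial.C * Λ * H.map Polynomial.C) X Y
      = (x : ℂ)⁻¹ • ∑ g : (ι → F) × (ι → F), ψ (X ⬝ᵥ g.1 + Y ⬝ᵥ g.2) • Λ g.1 g.2 := by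
  have hx' : ((Real.sqrt x)⁻¹ : ℂ) * ((Real.sqrt x)⁻¹ : ℂ) = (x : ℂ)⁻¹ := by
    rw [← mul_inv, ← Complex.ofReal_mul, Real.mul_self_sqrt hx]
  simp only [mul_apply, map_apply, Finset.sum_mul, Fintype.sum_prod_type, Finset.smul_sum]
  rw [Finset.sum_comm]
  refine Finset.sum_congr rfl fun W _ => Finset.sum_congr rfl fun Z _ => ?_
  rw [hH, hH, AddChar.map_add_eq_mul, dotProduct_comm Z, ← hx', smul_smul, ← Polynomial.C_mul']
  simp only [map_mul]
  ring

end CharacterSums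

section WeightEnumerator

variable {n : ℕ} {F : Type} [Field F] [Fintype F] [DecidableEq F]

theorem we_empty : we (∅ : Set (Fin n → F)) = 0 := by
  simp [we]

open Classical in
theorem we_image {α : Type*} [Fintype α] {f : α → Fin n → F} {s : Set α} (hf : s.InjOn f) :
    we (f '' s) = ∑ a, if a ∈ s then Polynomial.X ^ hammingNorm (f a) else 0 := by
  have himage : ({v | v ∈ f '' s} : Finset (Fin n → F)) = Finset.image f {a | a ∈ s} := by
    ext v; simp
  rw [we, ← Finset.sum_filter, ← Finset.sum_filter, himage, Finset.sum_image]
  simpa using hf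

theorem sum_X_pow_hammingNorm_linearMap {M : Type*} [AddCommGroup M] [Module F M] [Fintype M]
    (φ : M →ₗ[F] Fin n → F) :
    ∑ x, Polynomial.X ^ hammingNorm (φ x) = Nat.card (LinearMap.ker φ) • we (Set.range φ) := by
  classical
  have hker : Nat.card (LinearMap.ker φ) = (Finset.univ.filter fun x => φ x = 0).card := by
    rw [Nat.card_eq_fintype_card, ← Fintype.card_subtype]
    exact Fintype.card_congr (Equiv.subtypeEquivRight fun _ => LinearMap.mem_ker)
  rw [← Finset.sum_fiberwise Finset.univ φ, we, Finset.smul_sum]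
  refine Finset.sum_congr rfl fun v _ => ?_
  rw [Finset.sum_congr rfl fun x hx => by rw [(Finset.mem_filter.mp hx).2], Finset.sum_const]
  split_ifs with hv
  · rw [hker, AddMonoidHom.card_fiber_eq_of_mem_range φ hv ⟨0, map_zero φ⟩]
  · rw [Finset.filter_false_of_mem fun x _ hx => hv ⟨x, hx⟩, Finset.card_empty, zero_smul,
      smul_zero]

end WeightEnumerator

section Encoder

variable {F ι κ ν : Type*} [Field F] [Fintype ι] [Fintype κ]
  (A : Matrix ι ι F) (B : Matrix κ ι F) (Cm : Matrix ι ν F) (D : Matrix κ ν F)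

/-- The support `Δ` of the adjacency matrix. -/
def transitionSpace : Submodule F ((ι → F) × (ι → F)) where
  carrier := {g | ∃ u : κ → F, g.2 = g.1 ᵥ* A + u ᵥ* B}
  add_mem' := by
    rintro g h ⟨u, hu⟩ ⟨v, hv⟩
    exact ⟨u + v, by simp only [Prod.snd_add, Prod.fst_add, hu, hv, add_vecMul]; abel⟩
  zero_mem' := ⟨0, by simp⟩
  smul_mem' := by
    rintro a g ⟨u, hu⟩
    exact ⟨a • u, by simp only [Prod.smul_snd, Prod.smul_fst, hu, smul_add, smul_vecMul]⟩

/-- `λ_{W,Z}` is the weight enumerator of this set. -/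
def transitionOutputs (g : (ι → F) × (ι → F)) : Set (ν → F) :=
  {v | ∃ u : κ → F, g.2 = g.1 ᵥ* A + u ᵥ* B ∧ v = g.1 ᵥ* Cm + u ᵥ* D}

variable {A B Cm D}

theorem transitionOutputs_eq_empty {g : (ι → F) × (ι → F)} (hg : g ∉ transitionSpace A B) :
    transitionOutputs A B Cm D g = ∅ :=
  Set.eq_empty_of_forall_notMem fun _ ⟨u, hu, _⟩ => hg ⟨u, hu⟩

variable {Ccon : Submodule F (ν → F)}
  (hCcon : (Ccon : Set (ν → F)) = {v | ∃ w : κ → F, w ᵥ* B = 0 ∧ v = w ᵥ* D})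
include hCcon

theorem transitionOutputs_eq_setOf_sub_mem {g : (ι → F) × (ι → F)} {u : κ → F}
    (hu : g.2 = g.1 ᵥ* A + u ᵥ* B) :
    transitionOutputs A B Cm D g = {v | v - (g.1 ᵥ* Cm + u ᵥ* D) ∈ Ccon} := by
  ext v
  simp only [transitionOutputs, Set.mem_ofPred_eq, ← SetLike.mem_coe, hCcon]
  constructor
  · rintro ⟨u', hu', rfl⟩
    refine ⟨u' - u, ?_, ?_⟩
    · rw [sub_vecMul, sub_eq_zero]
      exact add_left_cancel (hu'.symm.trans hu)
    · rw [sub_vecMul]; abel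
  · rintro ⟨w, hw, hv⟩
    refine ⟨u + w, by rw [add_vecMul, hw, add_zero, hu], ?_⟩
    rw [add_vecMul, ← hv]; abel

theorem transitionOutputs_add (hAB : A * Bᵀ = 0) (hBB : B * Bᵀ * B = B)
    (g : (ι → F) × (ι → F)) {w : (ι → F) × (ι → F)} (hw : w ∈ transitionSpace A B)
    (hwC : w.1 ᵥ* Cm + (w.2 ᵥ* Bᵀ) ᵥ* D ∈ Ccon) :
    transitionOutputs A B Cm D (g + w) = transitionOutputs A B Cm D g := by
  by_cases hg : g ∈ transitionSpace A B
  · obtain ⟨u, hu⟩ := hg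
    obtain ⟨u', hu'⟩ := hw
    -- `Bᵀ` recovers the input `u'` from `w.2` up to the kernel of `B`
    have hker : (u' - w.2 ᵥ* Bᵀ) ᵥ* B = 0 := by
      rw [sub_vecMul, hu', add_vecMul, vecMul_vecMul, vecMul_vecMul, hAB, vecMul_zero, zero_add,
        vecMul_vecMul, hBB, sub_self]
    have hwC' : w.1 ᵥ* Cm + u' ᵥ* D ∈ Ccon := by
      have : w.1 ᵥ* Cm + u' ᵥ* D = (w.1 ᵥ* Cm + (w.2 ᵥ* Bᵀ) ᵥ* D) + (u' - w.2 ᵥ* Bᵀ) ᵥ* D := by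
        rw [sub_vecMul]; abel
      rw [this]
      refine Ccon.add_mem hwC ?_
      rw [← SetLike.mem_coe, hCcon]
      exact ⟨_, hker, rfl⟩
    have hgw : (g + w).2 = (g + w).1 ᵥ* A + (u + u') ᵥ* B := by
      simp only [Prod.snd_add, Prod.fst_add, hu, hu', add_vecMul]; abel
    rw [transitionOutputs_eq_setOf_sub_mem hCcon hgw, transitionOutputs_eq_setOf_sub_mem hCcon hu]
    ext v
    have : v - ((g + w).1 ᵥ* Cm + (u + u') ᵥ* D)
        = v - (g.1 ᵥ* Cm + u ᵥ* D) - (w.1 ᵥ* Cm + u' ᵥ* D) := by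
      simp only [Prod.fst_add, add_vecMul]; abel
    simp only [Set.mem_ofPred_eq, this, Ccon.sub_mem_iff_left hwC']
  · have hgw : g + w ∉ transitionSpace A B := fun h => hg (by simpa using sub_mem h hw)
    rw [transitionOutputs_eq_empty hg, transitionOutputs_eq_empty hgw]

omit [Fintype ι] in
theorem eq_zero_of_vecMul_eq_zero_of_card_eq [Finite F]
    (hcard : Nat.card {u : κ → F // u ᵥ* B = 0} = Nat.card Ccon)
    {u : κ → F} (huB : u ᵥ* B = 0) (huD : u ᵥ* D = 0) : u = 0 := by
  let f : {u : κ → F // u ᵥ* B = 0} → Ccon := fun u =>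
    ⟨u.1 ᵥ* D, by rw [← SetLike.mem_coe, hCcon]; exact ⟨u.1, u.2, rfl⟩⟩
  have hsurj : Function.Surjective f := by
    rintro ⟨v, hv⟩
    rw [← SetLike.mem_coe, hCcon] at hv
    obtain ⟨w, hw, rfl⟩ := hv
    exact ⟨⟨w, hw⟩, rfl⟩
  have hf : f ⟨u, huB⟩ = f ⟨0, zero_vecMul B⟩ := Subtype.ext (by simp [f, huD])
  exact congrArg Subtype.val (((Nat.bijective_iff_surjective_and_card f).mpr ⟨hsurj, hcard⟩).1 hf)

end Encoder

section Counting

variable {n : ℕ} {F ι κ : Type} [Field F] [Fintype F] [DecidableEq F] [Fintype ι] [DecidableEq ι]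
  [Fintype κ] [DecidableEq κ]
  {A : Matrix ι ι F} {B : Matrix κ ι F} {Cm : Matrix ι (Fin n) F} {D : Matrix κ (Fin n) F}

omit [DecidableEq ι] [DecidableEq κ] in
theorem mem_transitionSpace_of_we_ne_zero {g : (ι → F) × (ι → F)}
    (h : we (transitionOutputs A B Cm D g) ≠ 0) : g ∈ transitionSpace A B := by
  by_contra hg
  exact h (by rw [transitionOutputs_eq_empty hg, we_empty])

variable (hinj : ∀ u : κ → F, u ᵥ* B = 0 → u ᵥ* D = 0 → u = 0)
include hinj

theorem sum_we_transitionOutputs :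
    ∑ g, we (transitionOutputs A B Cm D g)
      = ∑ x : (ι → F) × (κ → F), Polynomial.X ^ hammingNorm (x.1 ᵥ* Cm + x.2 ᵥ* D) := by
  classical
  have himage : ∀ W Z : ι → F, transitionOutputs A B Cm D (W, Z)
      = (fun u => W ᵥ* Cm + u ᵥ* D) '' {u | Z = W ᵥ* A + u ᵥ* B} := by
    intro W Z; ext v; simp [transitionOutputs, eq_comm (a := v)]
  have hinjOn : ∀ W Z : ι → F,
      Set.InjOn (fun u => W ᵥ* Cm + u ᵥ* D) {u | Z = W ᵥ* A + u ᵥ* B} := by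
    intro W Z u hu u' hu' h
    refine sub_eq_zero.mp (hinj _ ?_ ?_) <;> rw [sub_vecMul, sub_eq_zero]
    · exact add_left_cancel (hu.symm.trans hu')
    · exact add_left_cancel h
  simp only [Fintype.sum_prod_type, himage, we_image (hinjOn _ _), Set.mem_ofPred_eq]
  rw [Finset.sum_congr rfl fun W _ => Finset.sum_comm]
  simp

variable {CC : Submodule F (Fin n → F)}
  (hCC : (CC : Set (Fin n → F)) = {v | ∃ (X : ι → F) (u : κ → F), v = X ᵥ* Cm + u ᵥ* D})
include hCC

theorem card_pow_finrank_smul_sum_we_transitionOutputs :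
    Fintype.card F ^ Module.finrank F CC • ∑ g, we (transitionOutputs A B Cm D g)
      = Fintype.card F ^ (Fintype.card ι + Fintype.card κ) • we (CC : Set (Fin n → F)) := by
  let φ : (ι → F) × (κ → F) →ₗ[F] Fin n → F := (vecMulLinear Cm).coprod (vecMulLinear D)
  have hrange : LinearMap.range φ = CC := by
    apply SetLike.coe_injective
    rw [LinearMap.coe_range, hCC]
    ext v
    simp [φ, eq_comm]
  have hrank := LinearMap.finrank_range_add_finrank_ker φ
  rw [hrange, Module.finrank_prod, Module.finrank_pi, Module.finrank_pi] at hrank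
  have hφ : ∀ x, φ x = x.1 ᵥ* Cm + x.2 ᵥ* D := fun _ => rfl
  simp only [sum_we_transitionOutputs hinj, ← hφ]
  rw [sum_X_pow_hammingNorm_linearMap φ, ← LinearMap.coe_range, hrange, smul_smul,
    Module.natCard_eq_pow_finrank (K := F), Nat.card_eq_fintype_card, ← pow_add, hrank]

theorem inv_pow_card_smul_sum_we_transitionOutputs {rhat : ℕ}
    (hrank : Module.finrank F CC = Fintype.card κ + rhat) :
    ((Fintype.card F : ℂ) ^ Fintype.card ι)⁻¹ • ∑ g, we (transitionOutputs A B Cm D g)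
      = ((Fintype.card F : ℂ) ^ rhat)⁻¹ • we (CC : Set (Fin n → F)) := by
  have h := card_pow_finrank_smul_sum_we_transitionOutputs (A := A) hinj hCC
  rw [hrank, ← Nat.cast_smul_eq_nsmul ℂ, ← Nat.cast_smul_eq_nsmul ℂ] at h
  push_cast at h
  set q : ℂ := (Fintype.card F : ℂ)
  have hq : q ≠ 0 := Nat.cast_ne_zero.mpr Fintype.card_ne_zero
  calc (q ^ Fintype.card ι)⁻¹ • ∑ g, we (transitionOutputs A B Cm D g)
      = ((q ^ Fintype.card ι)⁻¹ * (q ^ (Fintype.card κ + rhat))⁻¹)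
          • (q ^ (Fintype.card κ + rhat) • ∑ g, we (transitionOutputs A B Cm D g)) := by
        rw [smul_smul, mul_assoc, inv_mul_cancel₀ (pow_ne_zero _ hq), mul_one]
    _ = (q ^ rhat)⁻¹ • we (CC : Set (Fin n → F)) := by
        rw [h, smul_smul]
        congr 1
        field_simp
        ring

end Counting

section Companion

variable {F κ : Type*} [Field F] [Fintype κ] [DecidableEq κ] {d : κ → ℕ}
  {A : Matrix (Σ i, Fin (d i)) (Σ i, Fin (d i)) F} {B : Matrix κ (Σ i, Fin (d i)) F}

theorem companion_mul_transpose_eq_zero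
    (hA : ∀ x y, A x y = if x.1 = y.1 ∧ (x.2 : ℕ) + 1 = (y.2 : ℕ) then 1 else 0)
    (hB : ∀ i y, B i y = if i = y.1 ∧ (y.2 : ℕ) = 0 then 1 else 0) :
    A * Bᵀ = 0 := by
  ext x i
  simp only [mul_apply, transpose_apply, hA, hB, Matrix.zero_apply]
  refine Finset.sum_eq_zero fun y _ => ?_
  split_ifs with h1 h2
  · omega
  all_goals simp

variable (hB : ∀ i y, B i y = if i = y.1 ∧ (y.2 : ℕ) = 0 then 1 else 0)
include hB

theorem input_mul_transpose : B * Bᵀ = diagonal fun i => if 0 < d i then 1 else 0 := by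
  ext i j
  rw [mul_apply, Fintype.sum_sigma, diagonal_apply, Fintype.sum_eq_single i fun a ha =>
    Finset.sum_eq_zero fun b _ => by simp [hB, Ne.symm ha]]
  by_cases hi : 0 < d i
  · rw [Fintype.sum_eq_single ⟨0, hi⟩ fun b hb => by simp [hB, Fin.ext_iff.not.mp hb]]
    simp [hB, hi, eq_comm]
  · have : IsEmpty (Fin (d i)) := by rw [Nat.eq_zero_of_not_pos hi]; infer_instance
    simp [hi]

theorem input_mul_transpose_mul : B * Bᵀ * B = B := by
  ext i y
  rw [input_mul_transpose hB, diagonal_mul, hB]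
  by_cases h : i = y.1 ∧ (y.2 : ℕ) = 0
  · rw [if_pos (h.1 ▸ y.2.pos : 0 < d i), one_mul]
  · simp [h]

theorem vecMul_input_eq_zero_iff {u : κ → F} : u ᵥ* B = 0 ↔ ∀ i, 0 < d i → u i = 0 := by
  have hdiag : u ᵥ* (B * Bᵀ) = fun i => if 0 < d i then u i else 0 := by
    ext i; simp [input_mul_transpose hB, vecMul_diagonal]
  constructor
  · intro h i hi
    simpa [hi, ← vecMul_vecMul, h, eq_comm] using congrFun hdiag i
  · intro h
    have hzero : (fun i => if 0 < d i then u i else 0) = 0 :=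
      funext fun i => by split_ifs with hi; exacts [h i hi, rfl]
    rw [← input_mul_transpose_mul hB, ← vecMul_vecMul, hdiag, hzero, zero_vecMul]

theorem card_vecMul_input_eq_zero [Fintype F] :
    Nat.card {u : κ → F // u ᵥ* B = 0}
      = Fintype.card F ^ (Finset.univ.filter fun i => ¬ 0 < d i).card := by
  simp_rw [vecMul_input_eq_zero_iff hB]
  rw [Nat.card_congr (Equiv.subtypePiEquivPi (p := fun i b => 0 < d i → b = 0)), Nat.card_pi]
  have hcard : ∀ i, Nat.card {b : F // 0 < d i → b = 0} = if 0 < d i then 1 else Fintype.card F :=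
    fun i => by split_ifs with hi <;> simp [hi]
  simp only [hcard, Finset.prod_ite, Finset.prod_const_one, one_mul, Finset.prod_const]

theorem eq_zero_of_vecMul_input_eq_zero [Fintype F] {ν : Type*} [Fintype ν] {D : Matrix κ ν F}
    {Ccon : Submodule F (ν → F)}
    (hCcon : (Ccon : Set (ν → F)) = {v | ∃ w : κ → F, w ᵥ* B = 0 ∧ v = w ᵥ* D})
    (hrank : Module.finrank F Ccon
      = Fintype.card κ - (Finset.univ.filter fun i => 0 < d i).card)
    {u : κ → F} (huB : u ᵥ* B = 0) (huD : u ᵥ* D = 0) : u = 0 := by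
  refine eq_zero_of_vecMul_eq_zero_of_card_eq hCcon ?_ huB huD
  have hsplit := Finset.card_filter_add_card_filter_not (s := Finset.univ) (fun i => 0 < d i)
  rw [card_vecMul_input_eq_zero hB, Module.natCard_eq_pow_finrank (K := F) (V := Ccon),
    Nat.card_eq_fintype_card, hrank, ← Finset.card_univ (α := κ), ← hsplit,
    Nat.add_sub_cancel_left]

end Companion

theorem stmt_16_general {p s k n r rhat : ℕ} [Fact p.Prime]
    {F : Type} [Field F] [Fintype F] [DecidableEq F] [CharP F p] [Algebra (ZMod p) F]
    (hq : Fintype.card F = p ^ s)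
    (ζ : ℂ) (hζ : IsPrimitiveRoot ζ p)
    (τ : F → ZMod p)
    (hτ : ∀ a : F, algebraMap (ZMod p) F (τ a) = ∑ i ∈ Finset.range s, a ^ p ^ i)
    (d : Fin k → ℕ)
    (A : Matrix (Σ i, Fin (d i)) (Σ i, Fin (d i)) F)
    (B : Matrix (Fin k) (Σ i, Fin (d i)) F)
    (Cm : Matrix (Σ i, Fin (d i)) (Fin n) F)
    (D : Matrix (Fin k) (Fin n) F)
    (hA : ∀ x y, A x y = if x.1 = y.1 ∧ (x.2 : ℕ) + 1 = (y.2 : ℕ) then 1 else 0)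
    (hB : ∀ i y, B i y = if i = y.1 ∧ (y.2 : ℕ) = 0 then 1 else 0)
    (hr : r = (Finset.univ.filter fun i => 0 < d i).card)
    (lam : (((Σ i, Fin (d i)) → F) × ((Σ i, Fin (d i)) → F)) → Polynomial ℂ)
    (hlam : ∀ w, lam w
      = we {v | ∃ u : Fin k → F, w.2 = w.1 ᵥ* A + u ᵥ* B ∧ v = w.1 ᵥ* Cm + u ᵥ* D})
    (CCsub Ccon : Submodule F (Fin n → F))
    (hCCsub : (CCsub : Set (Fin n → F))
        = {v | ∃ (X : (Σ i, Fin (d i)) → F) (u : Fin k → F), v = X ᵥ* Cm + u ᵥ* D})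
    (hCcon : (Ccon : Set (Fin n → F))
        = {v | ∃ w : Fin k → F, w ᵥ* B = 0 ∧ v = w ᵥ* D})
    (hCCrank : Module.finrank F CCsub = k + rhat)
    (hCconrank : Module.finrank F Ccon = k - r)
    (H : Matrix ((Σ i, Fin (d i)) → F) ((Σ i, Fin (d i)) → F) ℂ)
    (hH : ∀ X Y, H X Y = ((Real.sqrt (((p : ℝ) ^ s) ^ (∑ i, d i)))⁻¹ : ℂ)
        * ζ ^ (τ (∑ x, X x * Y x)).val)
    (Λ : Matrix ((Σ i, Fin (d i)) → F) ((Σ i, Fin (d i)) → F) (Polynomial ℂ))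
    (hΛ : ∀ X Y, Λ X Y = lam (X, Y)) :
    (∀ X Y : (Σ i, Fin (d i)) → F,
      (∃ w : ((Σ i, Fin (d i)) → F) × ((Σ i, Fin (d i)) → F),
          ((∃ u : Fin k → F, w.2 = w.1 ᵥ* A + u ᵥ* B) ∧
            w.1 ᵥ* Cm + (w.2 ᵥ* Bᵀ) ᵥ* D ∈ Ccon) ∧
          (∑ x, X x * w.1 x) + (∑ x, Y x * w.2 x) ≠ 0) →
        (H.map Polynomial.C * Λ * H.map Polynomial.C) X Y = 0) ∧
    (∀ X Y : (Σ i, Fin (d i)) → F,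
      (∀ w : ((Σ i, Fin (d i)) → F) × ((Σ i, Fin (d i)) → F),
          (∃ u : Fin k → F, w.2 = w.1 ᵥ* A + u ᵥ* B) →
            (∑ x, X x * w.1 x) + (∑ x, Y x * w.2 x) = 0) →
        (H.map Polynomial.C * Λ * H.map Polynomial.C) X Y
          = Polynomial.C (((Fintype.card F : ℂ) ^ rhat)⁻¹)
              * we (CCsub : Set (Fin n → F))) ∧
    (∀ X Y U V : (Σ i, Fin (d i)) → F,
      (∀ w : ((Σ i, Fin (d i)) → F) × ((Σ i, Fin (d i)) → F),
          (∃ u : Fin k → F, w.2 = w.1 ᵥ* A + u ᵥ* B) →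
            (∑ x, U x * w.1 x) + (∑ x, V x * w.2 x) = 0) →
        (H.map Polynomial.C * Λ * H.map Polynomial.C) (X + U) (Y + V)
          = (H.map Polynomial.C * Λ * H.map Polynomial.C) X Y) := by
  set ψ := traceChar hζ hτ
  have hlam' : ∀ g, lam g = we (transitionOutputs A B Cm D g) := hlam
  have hΔ : ∀ g, lam g ≠ 0 → g ∈ transitionSpace A B := fun g hg =>
    mem_transitionSpace_of_we_ne_zero (by rwa [hlam'] at hg)
  have hnorm : ((((p : ℝ) ^ s) ^ (∑ i, d i) : ℝ) : ℂ)
      = (Fintype.card F : ℂ) ^ Fintype.card (Σ i, Fin (d i)) := by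
    simp [hq, Fintype.card_sigma]
  have hexp : ∀ X Y, (H.map Polynomial.C * Λ * H.map Polynomial.C) X Y
      = ((Fintype.card F : ℂ) ^ Fintype.card (Σ i, Fin (d i)))⁻¹
          • ∑ g, ψ (X ⬝ᵥ g.1 + Y ⬝ᵥ g.2) • lam g := fun X Y => by
    rw [map_C_mul_mul_map_C_apply ψ (by positivity) H hH Λ X Y, hnorm]
    simp only [hΛ]
  refine ⟨?_, fun X Y hXY => ?_, fun X Y U V hUV => ?_⟩
  · rintro X Y ⟨w, ⟨hwΔ, hwC⟩, hwt⟩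
    rw [hexp, sum_addChar_dotProduct_smul_eq_zero (traceChar_isPrimitive hζ hτ hq) lam
      (fun a g => ?_) hwt, smul_zero]
    rw [hlam', hlam', transitionOutputs_add hCcon (companion_mul_transpose_eq_zero hA hB)
      (input_mul_transpose_mul hB) g (Submodule.smul_mem _ a hwΔ)]
    simpa only [Prod.smul_fst, Prod.smul_snd, smul_vecMul, smul_add] using Ccon.smul_mem a hwC
  · have hinj := fun u => eq_zero_of_vecMul_input_eq_zero hB hCcon (u := u)
      (by rw [hCconrank, hr, Fintype.card_fin])
    have hsum : ∑ g, ψ (X ⬝ᵥ g.1 + Y ⬝ᵥ g.2) • lam g = ∑ g, we (transitionOutputs A B Cm D g) := by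
      rw [Finset.sum_smul_congr_of_ne_zero (f' := fun _ => 1) fun g hg => ?_]
      · simp only [one_smul, hlam']
      · have h0 : X ⬝ᵥ g.1 + Y ⬝ᵥ g.2 = 0 := hXY g (hΔ g hg)
        rw [h0, AddChar.map_zero_eq_one]
    rw [hexp, hsum, inv_pow_card_smul_sum_we_transitionOutputs hinj hCCsub
      (by rw [hCCrank, Fintype.card_fin]), Polynomial.C_mul']
  · rw [hexp, hexp]
    congr 1
    refine Finset.sum_smul_congr_of_ne_zero fun g hg => ?_
    have h0 : U ⬝ᵥ g.1 + V ⬝ᵥ g.2 = 0 := hUV g (hΔ g hg)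
    rw [add_dotProduct, add_dotProduct, add_add_add_comm, h0, add_zero]

/-- With `ℓ_{X,Y} = (HΛH)_{X,Y}` (adjacency matrix `Λ` of a minimal
encoder, MacWilliams matrix `H`): if `(X,Y) ∉ (ker Φ)^⊥` then `ℓ_{X,Y} = 0`; if
`(X,Y) ∈ Δ^⊥` then `ℓ_{X,Y} = q^{−r̂} we(C_C)`; and `ℓ_{X+U,Y+V} = ℓ_{X,Y}` for all
`(U,V) ∈ Δ^⊥`. -/
theorem stmt_16 {p s k n r rhat : ℕ} [Fact p.Prime] (hs : 0 < s)
    {F : Type} [Field F] [Fintype F] [DecidableEq F] [CharP F p] [Algebra (ZMod p) F]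
    (hq : Fintype.card F = p ^ s)
    (ζ : ℂ) (hζ : IsPrimitiveRoot ζ p)
    (τ : F → ZMod p)
    (hτ : ∀ a : F, algebraMap (ZMod p) F (τ a) = ∑ i ∈ Finset.range s, a ^ p ^ i)
    (G : Matrix (Fin k) (Fin n) (Polynomial F))
    (d : Fin k → ℕ)
    (hGdeg : ∀ i j, (G i j).natDegree ≤ d i)
    (hGbasic : ∃ G' : Matrix (Fin n) (Fin k) (Polynomial F), G * G' = 1)
    (hGmin : LinearIndependent F (fun i : Fin k => fun j : Fin n => (G i j).coeff (d i)))
    (A : Matrix (Σ i, Fin (d i)) (Σ i, Fin (d i)) F)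
    (B : Matrix (Fin k) (Σ i, Fin (d i)) F)
    (Cm : Matrix (Σ i, Fin (d i)) (Fin n) F)
    (D : Matrix (Fin k) (Fin n) F)
    (hA : ∀ x y, A x y = if x.1 = y.1 ∧ (x.2 : ℕ) + 1 = (y.2 : ℕ) then 1 else 0)
    (hB : ∀ i y, B i y = if i = y.1 ∧ (y.2 : ℕ) = 0 then 1 else 0)
    (hC : ∀ x j, Cm x j = (G x.1 j).coeff ((x.2 : ℕ) + 1))
    (hD : ∀ i j, D i j = (G i j).coeff 0)
    (hr : r = (Finset.univ.filter fun i => 0 < d i).card)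
    (lam : (((Σ i, Fin (d i)) → F) × ((Σ i, Fin (d i)) → F)) → Polynomial ℂ)
    (hlam : ∀ w, lam w
      = we {v | ∃ u : Fin k → F, w.2 = w.1 ᵥ* A + u ᵥ* B ∧ v = w.1 ᵥ* Cm + u ᵥ* D})
    (CCsub Ccon : Submodule F (Fin n → F))
    (hCCsub : (CCsub : Set (Fin n → F))
        = {v | ∃ (X : (Σ i, Fin (d i)) → F) (u : Fin k → F), v = X ᵥ* Cm + u ᵥ* D})
    (hCcon : (Ccon : Set (Fin n → F))
        = {v | ∃ w : Fin k → F, w ᵥ* B = 0 ∧ v = w ᵥ* D})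
    (hCCrank : Module.finrank F CCsub = k + rhat)
    (hCconrank : Module.finrank F Ccon = k - r)
    (H : Matrix ((Σ i, Fin (d i)) → F) ((Σ i, Fin (d i)) → F) ℂ)
    (hH : ∀ X Y, H X Y = ((Real.sqrt (((p : ℝ) ^ s) ^ (∑ i, d i)))⁻¹ : ℂ)
        * ζ ^ (τ (∑ x, X x * Y x)).val)
    (Λ : Matrix ((Σ i, Fin (d i)) → F) ((Σ i, Fin (d i)) → F) (Polynomial ℂ))
    (hΛ : ∀ X Y, Λ X Y = lam (X, Y)) :
    (∀ X Y : (Σ i, Fin (d i)) → F,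
      (∃ w : ((Σ i, Fin (d i)) → F) × ((Σ i, Fin (d i)) → F),
          ((∃ u : Fin k → F, w.2 = w.1 ᵥ* A + u ᵥ* B) ∧
            w.1 ᵥ* Cm + (w.2 ᵥ* Bᵀ) ᵥ* D ∈ Ccon) ∧
          (∑ x, X x * w.1 x) + (∑ x, Y x * w.2 x) ≠ 0) →
        (H.map Polynomial.C * Λ * H.map Polynomial.C) X Y = 0) ∧
    (∀ X Y : (Σ i, Fin (d i)) → F,
      (∀ w : ((Σ i, Fin (d i)) → F) × ((Σ i, Fin (d i)) → F),
          (∃ u : Fin k → F, w.2 = w.1 ᵥ* A + u ᵥ* B) →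
            (∑ x, X x * w.1 x) + (∑ x, Y x * w.2 x) = 0) →
        (H.map Polynomial.C * Λ * H.map Polynomial.C) X Y
          = Polynomial.C (((Fintype.card F : ℂ) ^ rhat)⁻¹)
              * we (CCsub : Set (Fin n → F))) ∧
    (∀ X Y U V : (Σ i, Fin (d i)) → F,
      (∀ w : ((Σ i, Fin (d i)) → F) × ((Σ i, Fin (d i)) → F),
          (∃ u : Fin k → F, w.2 = w.1 ᵥ* A + u ᵥ* B) →
            (∑ x, U x * w.1 x) + (∑ x, V x * w.2 x) = 0) →
        (H.map Polynomial.C * Λ * H.map Polynomial.C) (X + U) (Y + V)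
          = (H.map Polynomial.C * Λ * H.map Polynomial.C) X Y) :=
  stmt_16_general hq ζ hζ τ hτ d A B Cm D hA hB hr lam hlam CCsub Ccon hCCsub hCcon hCCrank
    hCconrank H hH Λ hΛ
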